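/- arXiv:2109.15007 — 2 statements merged into one kernel-verified Lean document; each statement's English description precedes it below -/
import Mathlib

section
/- If a, b > 0 with a + b ≥ 1 and f : [0,1) → ℝ satisfies 1/(1-f(s)) = a/(1-s) + b, then f(s) = (a+b-1)/(a+b) + (1/(a+b)) · (a/(a+b))s / (1 - (b/(a+b))s), i.e., the LF(a,b) distribution is the mixture ((a+b-1)/(a+b))·δ₀ + (1/(a+b))·Geom₊(a/(a+b)). -/
/-! Solving `1/(1 - f s) = a/(1 - s) + b` gives `f s = 1 - (1 - s)/(a + b(1 - s))`, and a partial-fraction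
decomposition in `s` splits this into the constant `(a+b-1)/(a+b)` plus `1/(a+b)` times the generating
function of `Geom₊(a/(a+b))`. -/

open Set

theorem eq_one_sub_inv_of_one_div_one_sub_eq {K : Type*} [DivisionRing K] {x c : K}
    (h : 1 / (1 - x) = c) : x = 1 - c⁻¹ := by
  rw [one_div, inv_eq_iff_eq_inv] at h
  rw [← h, sub_sub_cancel]

theorem one_sub_inv_div_one_sub_add_eq_mixture {K : Type*} [Field K] {a b s : K}
    (hs : 1 - s ≠ 0) (hab : a + b ≠ 0) (hden : a + (1 - s) * b ≠ 0) :
    1 - (a / (1 - s) + b)⁻¹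
      = (a + b - 1) / (a + b) + (1 / (a + b)) * ((a / (a + b)) * s / (1 - (b / (a + b)) * s)) := by
  have hden' : a + b - s * b ≠ 0 := by rwa [sub_mul, one_mul, ← add_sub_assoc] at hden
  field_simp
  ring

theorem stmt1_general (a b : ℝ) (ha : 0 < a) (hb : 0 < b)
    (f : ℝ → ℝ) (hf : ∀ s ∈ Ico (0:ℝ) 1, 1 / (1 - f s) = a / (1 - s) + b) :
    ∀ s ∈ Ico (0:ℝ) 1,
      f s = (a + b - 1) / (a + b)
        + (1 / (a + b)) * ((a / (a + b)) * s / (1 - (b / (a + b)) * s)) := by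
  rintro s ⟨hs0, hs1⟩
  rw [eq_one_sub_inv_of_one_div_one_sub_eq (hf s ⟨hs0, hs1⟩)]
  apply one_sub_inv_div_one_sub_add_eq_mixture <;> nlinarith

theorem stmt1 (a b : ℝ) (ha : 0 < a) (hb : 0 < b) (hab : 1 ≤ a + b)
    (f : ℝ → ℝ) (hf : ∀ s ∈ Ico (0:ℝ) 1, 1 / (1 - f s) = a / (1 - s) + b) :
    ∀ s ∈ Ico (0:ℝ) 1,
      f s = (a + b - 1) / (a + b)
        + (1 / (a + b)) * ((a / (a + b)) * s / (1 - (b / (a + b)) * s)) :=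
  stmt1_general a b ha hb f hf
end

section
/- Let f_{1:n}(s) = 1 - 1/(Πₙ/(1-s) + Rₙ) with Πₙ → 0 and Rₙ ↑ R_∞ ∈ [1,∞). Then for every u > 0, f_{1:n}(e^{-uΠₙ}) → 1 - 1/R_∞ + (1/R_∞)·(R_∞⁻¹/(R_∞⁻¹ + u)) as n → ∞, i.e., the quenched Laplace transform of W_∞ = lim ΠₙZₙ equals that of (1 - 1/R_∞)δ₀ + (1/R_∞)Exp(1/R_∞). -/
/-! `(1 - e^{-ux}) / x → u` as `x → 0`, being a difference quotient of `x ↦ 1 - e^{-ux}` at `0`.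
Hence the denominator `Πₙ / (1 - e^{-uΠₙ}) + Rₙ` tends to `1 / u + R_∞ > 0`, and
`1 - 1 / (1 / u + R_∞)` rearranges into the Laplace transform of the mixture. -/

open Filter Topology Real

theorem hasDerivAt_one_sub_exp_neg_mul (u : ℝ) :
    HasDerivAt (fun x => 1 - exp (-(u * x))) u 0 := by
  simpa using (((hasDerivAt_id (0 : ℝ)).const_mul u).neg.exp).const_sub 1

theorem tendsto_one_sub_exp_neg_mul_div (u : ℝ) :
    Tendsto (fun x => (1 - exp (-(u * x))) / x) (𝓝[≠] 0) (𝓝 u) := by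
  refine (hasDerivAt_one_sub_exp_neg_mul u).tendsto_slope_zero.congr fun x => ?_
  simp [div_eq_inv_mul]

theorem tendsto_div_one_sub_exp_neg_mul {P : ℕ → ℝ} (hP : ∀ n, P n ≠ 0)
    (hPlim : Tendsto P atTop (𝓝 0)) {u : ℝ} (hu : u ≠ 0) :
    Tendsto (fun n => P n / (1 - exp (-(u * P n)))) atTop (𝓝 (1 / u)) := by
  have hP' : Tendsto P atTop (𝓝[≠] 0) :=
    tendsto_nhdsWithin_of_tendsto_nhds_of_eventually_within _ hPlim (Eventually.of_forall hP)
  simpa [one_div, inv_div] using ((tendsto_one_sub_exp_neg_mul_div u).comp hP').inv₀ hu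

theorem one_sub_one_div_one_div_add_eq_mixture {u R : ℝ} (hu : 0 < u) (hR : 0 < R) :
    1 - 1 / (1 / u + R) = 1 - 1 / R + (1 / R) * ((1 / R) / (1 / R + u)) := by
  field_simp
  ring

theorem stmt16_general (P R : ℕ → ℝ) (hP : ∀ n, 0 < P n)
    (R' : ℝ) (hR' : 1 ≤ R')
    (hPlim : Tendsto P atTop (nhds 0)) (hRlim : Tendsto R atTop (nhds R'))
    (u : ℝ) (hu : 0 < u) :
    Tendsto (fun n => 1 - 1 / (P n / (1 - Real.exp (-(u * P n))) + R n)) atTop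
      (nhds (1 - 1 / R' + (1 / R') * ((1 / R') / (1 / R' + u)))) := by
  have hR'pos : 0 < R' := by linarith
  rw [← one_sub_one_div_one_div_add_eq_mixture hu hR'pos]
  have hden := (tendsto_div_one_sub_exp_neg_mul (fun n => (hP n).ne') hPlim hu.ne').add hRlim
  exact (tendsto_const_nhds.div hden (by positivity)).const_sub 1

theorem stmt16 (P R : ℕ → ℝ) (hP : ∀ n, 0 < P n) (hR : ∀ n, 0 < R n)
    (R' : ℝ) (hR' : 1 ≤ R')
    (hPlim : Tendsto P atTop (nhds 0)) (hRlim : Tendsto R atTop (nhds R'))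
    (u : ℝ) (hu : 0 < u) :
    Tendsto (fun n => 1 - 1 / (P n / (1 - Real.exp (-(u * P n))) + R n)) atTop
      (nhds (1 - 1 / R' + (1 / R') * ((1 / R') / (1 / R' + u)))) :=
  stmt16_general P R hP R' hR' hPlim hRlim u hu
end
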